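/- Let G be a d-regular graph on n vertices. Then the number of subtrees of G with exactly k vertices is at most n · k^(k−2) · d^(k−1) / k!. -/

import Mathlib

open MeasureTheory Filter Real

section Defs

variable {V : Type*}

def SimpleGraph.percGraph (G : SimpleGraph V) [DecidableRel G.Adj]
    (ω : Sym2 V → Bool) : SimpleGraph V where
  Adj u v := G.Adj u v ∧ ω s(u, v) = true
  symm := ⟨fun u v h => ⟨h.1.symm, by rw [Sym2.eq_swap]; exact h.2⟩⟩
  loopless := ⟨fun v h => G.loopless.irrefl v h.1⟩

instance {G : SimpleGraph V} [DecidableRel G.Adj] {ω : Sym2 V → Bool} :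
    DecidableRel (G.percGraph ω).Adj := fun u v =>
  inferInstanceAs (Decidable (G.Adj u v ∧ ω s(u, v) = true))

noncomputable def percMeasure (V : Type*) [Fintype V] [DecidableEq V] (p : ℝ) :
    Measure (Sym2 V → Bool) :=
  Measure.pi fun _ => (PMF.bernoulli (min (Real.toNNReal p) 1) (min_le_right _ _)).toMeasure

def IsNDLGraph [Fintype V] (G : SimpleGraph V) [DecidableRel G.Adj] (d : ℕ) (lam : ℝ) : Prop :=
  G.IsRegularOfDegree d ∧
  ∀ f : V → ℝ, (∑ v, f v = 0) →
    ∑ v, ((G.adjMatrix ℝ).mulVec f v) ^ 2 ≤ lam ^ 2 * ∑ v, (f v) ^ 2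

def epairs [Fintype V] (H : SimpleGraph V) [DecidableRel H.Adj] (A B : Finset V) : ℕ :=
  ∑ a ∈ A, ∑ b ∈ B, if H.Adj a b then 1 else 0

def extNbhd [Fintype V] [DecidableEq V] (H : SimpleGraph V) [DecidableRel H.Adj]
    (S : Finset V) : Finset V :=
  Finset.univ.filter fun v => v ∉ S ∧ ∃ u ∈ S, H.Adj u v

def IsLargestComponent (H : SimpleGraph V) (K : Set V) : Prop :=
  (∃ C : H.ConnectedComponent, K = C.supp) ∧
  ∀ C' : H.ConnectedComponent, C'.supp.ncard ≤ K.ncard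

noncomputable def gball [Fintype V] (H : SimpleGraph V) (v : V) (r : ℕ) : Finset V :=
  Finset.univ.filter fun u => H.dist v u ≤ r

end Defs

/-!
Label the `k` vertices of a subtree by `Fin k` in all `k!` ways. A labelled subtree is a tree
`T` on `Fin k` together with a map `Fin k → V` sending the edges of `T` to edges of `G`. There
are at most `k ^ (k - 2)` trees on `Fin k`, since the Prüfer code is injective, and for a fixed
tree at most `n * d ^ (k - 1)` such maps: once the image of the last vertex is chosen, undoing
the leaf deletions of the Prüfer procedure fixes the image of each leaf as one of the at most
`d` neighbours of the image of a vertex already placed.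
-/

open Finset
open scoped Nat

lemma List.eq_of_dropLast_eq {β : Type*} {l l' : List β} (hlen : l.length = l'.length)
    (hdrop : l.dropLast = l'.dropLast) (hlast : ∀ h h', l.getLast h = l'.getLast h') :
    l = l' := by
  rcases eq_or_ne l [] with rfl | h
  · exact (List.length_eq_zero_iff.1 hlen.symm).symm
  · have h' : l' ≠ [] := by rwa [ne_eq, ← List.length_eq_zero_iff, ← hlen, List.length_eq_zero_iff]
    rw [← List.dropLast_append_getLast h, ← List.dropLast_append_getLast h', hdrop, hlast h h']

namespace SimpleGraph

variable {V : Type*} [Fintype V] {G : SimpleGraph V} [DecidableRel G.Adj] {d : ℕ}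

noncomputable def neighborIndex (hdeg : ∀ v, G.degree v ≤ d) {v u : V} (h : G.Adj v u) : Fin d :=
  Fin.castLE (hdeg v) ((G.neighborFinset v).equivFin ⟨u, (G.mem_neighborFinset v u).2 h⟩)

lemma eq_of_neighborIndex_eq (hdeg : ∀ v, G.degree v ≤ d) {v v' u u' : V} (h : G.Adj v u)
    (h' : G.Adj v' u') (hv : v = v') (hidx : neighborIndex hdeg h = neighborIndex hdeg h') :
    u = u' := by
  subst hv
  simpa using (G.neighborFinset v).equivFin.injective (Fin.castLE_injective _ hidx)

end SimpleGraph

namespace Prufer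

variable {α : Type*}

def Reachable (t : Finset (Sym2 α)) : α → α → Prop :=
  Relation.ReflTransGen fun a b => s(a, b) ∈ t

structure IsTreeOn (s : Finset α) (t : Finset (Sym2 α)) : Prop where
  not_isDiag : ∀ e ∈ t, ¬ e.IsDiag
  mem_of_mem_edge : ∀ e ∈ t, ∀ i ∈ e, i ∈ s
  reachable : ∀ i ∈ s, ∀ j ∈ s, Reachable t i j
  card_add_one : #t + 1 = #s

variable {s : Finset α} {t : Finset (Sym2 α)}

lemma IsTreeOn.ne_of_mem (hT : IsTreeOn s t) {a b : α} (h : s(a, b) ∈ t) : a ≠ b :=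
  fun hab => hT.not_isDiag _ h (by simp [hab])

lemma IsTreeOn.left_mem (hT : IsTreeOn s t) {a b : α} (h : s(a, b) ∈ t) : a ∈ s :=
  hT.mem_of_mem_edge _ h a (Sym2.mem_mk_left a b)

lemma IsTreeOn.right_mem (hT : IsTreeOn s t) {a b : α} (h : s(a, b) ∈ t) : b ∈ s :=
  hT.mem_of_mem_edge _ h b (Sym2.mem_mk_right a b)

theorem isTreeOn_univ_edgeFinset [Fintype α] {T : SimpleGraph α} [Fintype T.edgeSet]
    (hT : T.IsTree) : IsTreeOn univ T.edgeFinset := by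
  refine ⟨fun e he => T.not_isDiag_of_mem_edgeSet (SimpleGraph.mem_edgeFinset.1 he),
    fun _ _ i _ => mem_univ i, fun i _ j _ => ?_, by rw [card_univ]; exact hT.card_edgeFinset⟩
  exact Relation.ReflTransGen.mono (fun a b h => SimpleGraph.mem_edgeFinset.2 h) _ _
    ((SimpleGraph.reachable_iff_reflTransGen i j).1 (hT.connected i j))

section DecidableEq

variable [DecidableEq α]

def degree (t : Finset (Sym2 α)) (i : α) : ℕ := #{e ∈ t | i ∈ e}

lemma degree_eq_degree_erase_add {e : Sym2 α} (he : e ∈ t) (i : α) :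
    degree t i = degree (t.erase e) i + if i ∈ e then 1 else 0 := by
  unfold degree
  rw [filter_erase]
  split_ifs with h
  · rw [card_erase_of_mem (mem_filter.2 ⟨he, h⟩)]
    have : 0 < #{e ∈ t | i ∈ e} := card_pos.2 ⟨e, mem_filter.2 ⟨he, h⟩⟩
    omega
  · rw [erase_eq_of_notMem (a := e) fun hc => h (mem_filter.1 hc).2, add_zero]

lemma eq_of_mem_of_degree_eq_one {ℓ : α} (hdeg : degree t ℓ = 1) {e₁ e₂ : Sym2 α}
    (h₁ : e₁ ∈ t) (h₂ : e₂ ∈ t) (m₁ : ℓ ∈ e₁) (m₂ : ℓ ∈ e₂) : e₁ = e₂ :=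
  card_le_one.1 hdeg.le _ (mem_filter.2 ⟨h₁, m₁⟩) _ (mem_filter.2 ⟨h₂, m₂⟩)

/-- A path ending at the leaf `ℓ` is rerouted to end at its neighbour `n`. -/
lemma reachable_erase_leaf {ℓ n : α} (huniq : ∀ e ∈ t, ℓ ∈ e → e = s(ℓ, n)) (hℓn : ℓ ≠ n)
    {x y : α} (hx : x ≠ ℓ) (hxy : Reachable t x y) :
    Reachable (t.erase s(ℓ, n)) x (if y = ℓ then n else y) := by
  induction hxy with
  | refl => rw [if_neg hx]; exact .refl
  | @tail c y _ hcy ih =>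
    by_cases hc : c = ℓ
    · subst hc
      have hy : y = n := by
        have := Sym2.eq_iff.1 (huniq _ hcy (Sym2.mem_mk_left _ _)); tauto
      subst hy
      simpa [Ne.symm hℓn] using ih
    · rw [if_neg hc] at ih
      by_cases hy : y = ℓ
      · subst hy
        have hcn : c = n := by
          have := Sym2.eq_iff.1 (huniq _ hcy (Sym2.mem_mk_right _ _)); tauto
        subst hcn
        rwa [if_pos rfl]
      · rw [if_neg hy]
        refine ih.tail (mem_erase.2 ⟨fun h => ?_, hcy⟩)
        have : ℓ ∈ s(c, y) := h ▸ Sym2.mem_mk_left ℓ n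
        rcases Sym2.mem_iff.1 this with h | h
        exacts [hc h.symm, hy h.symm]

namespace IsTreeOn

lemma sum_degree (hT : IsTreeOn s t) : ∑ i ∈ s, degree t i = 2 * #t := by
  simp only [degree, card_filter]
  rw [sum_comm, mul_comm, ← smul_eq_mul, ← sum_const]
  refine sum_congr rfl fun e he => ?_
  induction e using Sym2.inductionOn with
  | hf a b =>
    rw [← card_filter, ← card_pair (hT.ne_of_mem he)]
    congr 1
    ext i
    simp only [mem_filter, Sym2.mem_iff, mem_insert, mem_singleton]
    constructor
    · exact fun h => h.2
    · rintro (rfl | rfl)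
      exacts [⟨hT.left_mem he, .inl rfl⟩, ⟨hT.right_mem he, .inr rfl⟩]

lemma one_le_degree (hT : IsTreeOn s t) (hs : 2 ≤ #s) {i : α} (hi : i ∈ s) :
    1 ≤ degree t i := by
  obtain ⟨j, hj, hji⟩ := exists_mem_ne (s := s) hs i
  rcases Relation.ReflTransGen.cases_head (hT.reachable i hi j hj) with h | ⟨c, hic, -⟩
  · exact absurd h.symm hji
  · exact card_pos.2 ⟨s(i, c), mem_filter.2 ⟨hic, Sym2.mem_mk_left i c⟩⟩

lemma exists_degree_eq_one_ne (hT : IsTreeOn s t) (hs : 2 ≤ #s) (i : α) :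
    ∃ j ∈ s, j ≠ i ∧ degree t j = 1 := by
  by_contra! h
  have hle : ∀ j ∈ s, 2 ≤ degree t j + if j = i then 1 else 0 := by
    intro j hj
    have := hT.one_le_degree hs hj
    split_ifs with hji
    · omega
    · have := h j hj hji; omega
  have hsum := sum_le_sum hle
  rw [sum_const, smul_eq_mul, sum_add_distrib, hT.sum_degree, sum_ite_eq'] at hsum
  have := hT.card_add_one
  split_ifs at hsum <;> omega

lemma erase_leaf (hT : IsTreeOn s t) {ℓ n : α} (hℓ : ℓ ∈ s) (he : s(ℓ, n) ∈ t)
    (hdeg : degree t ℓ = 1) : IsTreeOn (s.erase ℓ) (t.erase s(ℓ, n)) := by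
  have huniq : ∀ e ∈ t, ℓ ∈ e → e = s(ℓ, n) := fun e het hℓe =>
    eq_of_mem_of_degree_eq_one hdeg het he hℓe (Sym2.mem_mk_left ℓ n)
  refine ⟨fun e he' => hT.not_isDiag e (mem_of_mem_erase he'), fun e he' i hi => ?_,
    fun x hx y hy => ?_, ?_⟩
  · refine mem_erase.2 ⟨?_, hT.mem_of_mem_edge e (mem_of_mem_erase he') i hi⟩
    rintro rfl
    exact (mem_erase.1 he').1 (huniq e (mem_of_mem_erase he') hi)
  · have := reachable_erase_leaf huniq (hT.ne_of_mem he) (ne_of_mem_erase hx)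
      (hT.reachable x (mem_of_mem_erase hx) y (mem_of_mem_erase hy))
    rwa [if_neg (ne_of_mem_erase hy)] at this
  · rw [card_erase_of_mem he, card_erase_of_mem hℓ, ← hT.card_add_one]
    have : 0 < #t := card_pos.2 ⟨_, he⟩
    omega

end IsTreeOn

end DecidableEq

variable [LinearOrder α]

lemma IsTreeOn.ne_max'_of_le_of_degree_eq_one (hT : IsTreeOn s t) (hs : 2 ≤ #s) {ℓ : α}
    (hmin : ∀ i ∈ s, degree t i = 1 → ℓ ≤ i) (hne : s.Nonempty) : ℓ ≠ s.max' hne := by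
  obtain ⟨j, hj, hjℓ, hdeg⟩ := hT.exists_degree_eq_one_ne hs ℓ
  exact ((hmin j hj hdeg).lt_of_ne hjℓ.symm).trans_le (le_max' s j hj) |>.ne

lemma IsTreeOn.max'_erase_of_le_of_degree_eq_one (hT : IsTreeOn s t) {ℓ n : α} (hℓ : ℓ ∈ s)
    (he : s(ℓ, n) ∈ t) (hmin : ∀ i ∈ s, degree t i = 1 → ℓ ≤ i) (hne : s.Nonempty)
    (hne' : (s.erase ℓ).Nonempty) : (s.erase ℓ).max' hne' = s.max' hne := by
  have hs : 2 ≤ #s := one_lt_card.2 ⟨ℓ, hℓ, n, hT.right_mem he, hT.ne_of_mem he⟩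
  refine le_antisymm (max'_le _ _ _ fun y hy => le_max' s y (mem_of_mem_erase hy))
    (le_max' _ _ (mem_erase.2 ⟨?_, max'_mem s hne⟩))
  exact (hT.ne_max'_of_le_of_degree_eq_one hs hmin hne).symm

/-- `PruferSeq s t L`: `L` lists the pairs (leaf, neighbour) deleted, in order, when the least
leaf of the tree `t` on `s` is removed repeatedly until one vertex is left. The second components,
without the last one (always `s.max'`), form the Prüfer code of `t`. -/
inductive PruferSeq : Finset α → Finset (Sym2 α) → List (α × α) → Prop
  | single (i : α) : PruferSeq {i} ∅ []
  | cons {s : Finset α} {t : Finset (Sym2 α)} {L : List (α × α)} (ℓ n : α) (hℓ : ℓ ∈ s)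
      (he : s(ℓ, n) ∈ t) (hdeg : degree t ℓ = 1) (hmin : ∀ i ∈ s, degree t i = 1 → ℓ ≤ i)
      (hL : PruferSeq (s.erase ℓ) (t.erase s(ℓ, n)) L) : PruferSeq s t ((ℓ, n) :: L)

theorem exists_pruferSeq (hT : IsTreeOn s t) : ∃ L, PruferSeq s t L := by
  obtain ⟨m, hm⟩ : ∃ m, #s = m := ⟨_, rfl⟩
  induction m generalizing s t with
  | zero => have := hT.card_add_one; omega
  | succ m ih =>
    rcases Nat.lt_or_ge #s 2 with hs | hs
    · obtain ⟨i, rfl⟩ := card_eq_one.1 (show #s = 1 by omega)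
      have ht : t = ∅ := card_eq_zero.1 (by
        have := hT.card_add_one
        rw [card_singleton] at this
        omega)
      exact ⟨[], ht ▸ .single i⟩
    · obtain ⟨i, -⟩ := card_pos.1 (show 0 < #s by omega)
      obtain ⟨j, hj, -, hj1⟩ := hT.exists_degree_eq_one_ne hs i
      have hleaves : ({i ∈ s | degree t i = 1}).Nonempty := ⟨j, mem_filter.2 ⟨hj, hj1⟩⟩
      obtain ⟨hℓ, hdeg⟩ := mem_filter.1 (min'_mem _ hleaves)
      set ℓ := ({i ∈ s | degree t i = 1}).min' hleaves
      have hmin : ∀ i ∈ s, degree t i = 1 → ℓ ≤ i := fun i hi hi1 =>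
        min'_le _ _ (mem_filter.2 ⟨hi, hi1⟩)
      obtain ⟨e, he⟩ : ({e ∈ t | ℓ ∈ e}).Nonempty := card_pos.1 (by unfold degree at hdeg; omega)
      obtain ⟨het, hℓe⟩ := mem_filter.1 he
      obtain ⟨n, rfl⟩ := Sym2.mem_iff_exists.1 hℓe
      obtain ⟨L, hL⟩ := ih (hT.erase_leaf hℓ het hdeg) (by rw [card_erase_of_mem hℓ]; omega)
      exact ⟨_, .cons ℓ n hℓ het hdeg hmin hL⟩

namespace PruferSeq

variable {L : List (α × α)}

lemma length_add_one (h : PruferSeq s t L) : L.length + 1 = #s := by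
  induction h with
  | single i => simp
  | @cons s t L ℓ n hℓ he hdeg hmin hL ih =>
    rw [card_erase_of_mem hℓ] at ih
    have : 0 < #s := card_pos.2 ⟨ℓ, hℓ⟩
    simp only [List.length_cons]
    omega

lemma mem_edges (h : PruferSeq s t L) : ∀ p ∈ L, s(p.1, p.2) ∈ t := by
  induction h with
  | single i => simp
  | @cons s t L ℓ n hℓ he hdeg hmin hL ih =>
    simp only [List.mem_cons]
    rintro p (rfl | hp)
    exacts [he, mem_of_mem_erase (ih p hp)]

lemma degree_eq_count_add (h : PruferSeq s t L) (hT : IsTreeOn s t) {i : α} (hi : i ∈ s) :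
    degree t i = (L.map Prod.snd).count i + if i ∈ L.map Prod.fst then 1 else 0 := by
  induction h with
  | single j => simp [degree]
  | @cons s t L ℓ n hℓ he hdeg hmin hL ih =>
    have hT' := hT.erase_leaf hℓ he hdeg
    rcases eq_or_ne i ℓ with rfl | hiℓ
    · have : i ∉ L.map Prod.snd := fun hmem => by
        obtain ⟨p, hp, rfl⟩ := List.mem_map.1 hmem
        exact (mem_erase.1 (hT'.right_mem (hL.mem_edges p hp))).1 rfl
      simp [List.count_eq_zero.2 this, hdeg, (hT.ne_of_mem he).symm]
    · rw [degree_eq_degree_erase_add he, ih hT' (mem_erase.2 ⟨hiℓ, hi⟩)]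
      simp only [List.map_cons, List.count_cons, List.mem_cons, Sym2.mem_iff, hiℓ, false_or,
        beq_iff_eq, eq_comm (a := i)]
      omega

lemma mem_map_fst_iff (h : PruferSeq s t L) (hT : IsTreeOn s t) (hne : s.Nonempty) {i : α}
    (hi : i ∈ s) : i ∈ L.map Prod.fst ↔ i ≠ s.max' hne := by
  induction h with
  | single j =>
    obtain rfl := mem_singleton.1 hi
    simp
  | @cons s t L ℓ n hℓ he hdeg hmin hL ih =>
    have hne' : (s.erase ℓ).Nonempty :=
      ⟨n, mem_erase.2 ⟨(hT.ne_of_mem he).symm, hT.right_mem he⟩⟩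
    have hs : 2 ≤ #s := one_lt_card.2 ⟨ℓ, hℓ, n, hT.right_mem he, hT.ne_of_mem he⟩
    rcases eq_or_ne i ℓ with rfl | hiℓ
    · simpa using hT.ne_max'_of_le_of_degree_eq_one hs hmin hne
    · simp only [List.map_cons, List.mem_cons, hiℓ, false_or]
      rw [ih (hT.erase_leaf hℓ he hdeg) hne' (mem_erase.2 ⟨hiℓ, hi⟩),
        hT.max'_erase_of_le_of_degree_eq_one hℓ he hmin hne]

lemma getLast_map_snd (h : PruferSeq s t L) (hT : IsTreeOn s t) (hne : s.Nonempty)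
    (hnil : L.map Prod.snd ≠ []) : (L.map Prod.snd).getLast hnil = s.max' hne := by
  induction h with
  | single j => simp at hnil
  | @cons s t L ℓ n hℓ he hdeg hmin hL ih =>
    have hns : n ∈ s.erase ℓ := mem_erase.2 ⟨(hT.ne_of_mem he).symm, hT.right_mem he⟩
    rw [← hT.max'_erase_of_le_of_degree_eq_one hℓ he hmin hne ⟨n, hns⟩]
    rcases eq_or_ne L [] with rfl | hL0
    · have hcard : #(s.erase ℓ) ≤ 1 := by have := hL.length_add_one; simp at this; omega
      simp only [List.map_cons, List.map_nil, List.getLast_singleton]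
      exact le_antisymm (le_max' _ _ hns)
        (max'_le _ _ _ fun y hy => (card_le_one.1 hcard y hy n hns).le)
    · have hnil' : L.map Prod.snd ≠ [] := by simpa using hL0
      simp only [List.map_cons]
      rw [List.getLast_cons hnil']
      exact ih (hT.erase_leaf hℓ he hdeg) ⟨n, hns⟩ hnil'

lemma eq_of_map_snd_eq {t' : Finset (Sym2 α)} {L' : List (α × α)} (h : PruferSeq s t L)
    (h' : PruferSeq s t' L') (hT : IsTreeOn s t) (hT' : IsTreeOn s t')
    (hsnd : L.map Prod.snd = L'.map Prod.snd) : t = t' := by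
  induction h generalizing t' L' with
  | single i =>
    have := hT'.card_add_one
    rw [card_singleton] at this
    exact (card_eq_zero.1 (by omega)).symm
  | @cons s t L ℓ n hℓ he hdeg hmin hL ih =>
    cases h' with
    | single i =>
      exact absurd ((mem_singleton.1 hℓ).trans (mem_singleton.1 (hT.right_mem he)).symm)
        (hT.ne_of_mem he)
    | cons ℓ' n' hℓ' he' hdeg' hmin' hL' =>
      have hne : s.Nonempty := ⟨ℓ, hℓ⟩
      have hc := PruferSeq.cons ℓ n hℓ he hdeg hmin hL
      have hc' := PruferSeq.cons ℓ' n' hℓ' he' hdeg' hmin' hL'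
      have hdeg_eq : ∀ i ∈ s, degree t i = degree t' i := fun i hi => by
        rw [hc.degree_eq_count_add hT hi, hc'.degree_eq_count_add hT' hi, hsnd]
        simp only [hc.mem_map_fst_iff hT hne hi, hc'.mem_map_fst_iff hT' hne hi]
      obtain rfl : ℓ = ℓ' := le_antisymm (hmin ℓ' hℓ' (by rw [hdeg_eq ℓ' hℓ', hdeg']))
        (hmin' ℓ hℓ (by rw [← hdeg_eq ℓ hℓ, hdeg]))
      simp only [List.map_cons, List.cons.injEq] at hsnd
      obtain ⟨rfl, htail⟩ := hsnd
      have := ih hL' (hT.erase_leaf hℓ he hdeg) (hT'.erase_leaf hℓ' he' hdeg') htail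
      rw [← insert_erase he, this, insert_erase he']

lemma eqOn {β : Type*} (h : PruferSeq s t L) (hT : IsTreeOn s t) {F F' : α → β}
    (hstep : ∀ p ∈ L, F p.2 = F' p.2 → F p.1 = F' p.1)
    (hroot : ∀ i ∈ s, i ∉ L.map Prod.fst → F i = F' i) : Set.EqOn F F' s := by
  induction h with
  | single j => exact fun i hi => hroot i hi (by simp)
  | @cons s t L ℓ n hℓ he hdeg hmin hL ih =>
    have ih' := ih (hT.erase_leaf hℓ he hdeg)
      (fun p hp => hstep p (List.mem_cons_of_mem _ hp))
      (fun j hj hjL => hroot j (mem_of_mem_erase hj) (by simp [ne_of_mem_erase hj, hjL]))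
    intro i hi
    rcases eq_or_ne i ℓ with rfl | hiℓ
    · exact hstep _ List.mem_cons_self
        (ih' (mem_erase.2 ⟨(hT.ne_of_mem he).symm, hT.right_mem he⟩))
    · exact ih' (mem_erase.2 ⟨hiℓ, hi⟩)

end PruferSeq

section Counting

variable [Fintype α]

theorem card_isTree_le :
    Nat.card {T : SimpleGraph α // T.IsTree} ≤ Fintype.card α ^ (Fintype.card α - 2) := by
  classical
  choose L hL using fun T : {T : SimpleGraph α // T.IsTree} =>
    exists_pruferSeq (isTreeOn_univ_edgeFinset T.2)
  have hlen : ∀ T, (L T).length + 1 = Fintype.card α := fun T => (hL T).length_add_one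
  let code (T : {T : SimpleGraph α // T.IsTree}) : List.Vector α (Fintype.card α - 2) :=
    ⟨((L T).map Prod.snd).dropLast, by simp [← hlen T]⟩
  refine (Nat.card_le_card_of_injective code fun T T' hcode => Subtype.ext ?_).trans
    (by rw [Nat.card_eq_fintype_card, card_vector])
  have hlenT := hlen T
  have hlenT' := hlen T'
  have hne : (univ : Finset α).Nonempty := card_pos.1 (by simp; omega)
  refine SimpleGraph.edgeFinset_inj.1 ((hL T).eq_of_map_snd_eq (hL T')
    (isTreeOn_univ_edgeFinset T.2) (isTreeOn_univ_edgeFinset T'.2) ?_)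
  refine List.eq_of_dropLast_eq (by simp only [List.length_map]; omega)
    (congrArg Subtype.val hcode) fun h h' => ?_
  rw [(hL T).getLast_map_snd (isTreeOn_univ_edgeFinset T.2) hne,
    (hL T').getLast_map_snd (isTreeOn_univ_edgeFinset T'.2) hne]

variable {V : Type*} [Fintype V] {G : SimpleGraph V} [DecidableRel G.Adj] {d : ℕ}

theorem card_hom_le (hdeg : ∀ v, G.degree v ≤ d) {T : SimpleGraph α} (hT : T.IsTree) :
    Nat.card (T →g G) ≤ Fintype.card V * d ^ (Fintype.card α - 1) := by
  classical
  have hT' := isTreeOn_univ_edgeFinset hT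
  obtain ⟨L, hL⟩ := exists_pruferSeq hT'
  have hlen : L.length + 1 = Fintype.card α := hL.length_add_one
  have hne : (univ : Finset α).Nonempty := card_pos.1 (by simp; omega)
  have hadj (f : T →g G) (p : {p // p ∈ L}) : G.Adj (f p.1.2) (f p.1.1) :=
    f.map_adj (SimpleGraph.mem_edgeFinset.1 (hL.mem_edges p.1 p.2)).symm
  let code (f : T →g G) : V × List.Vector (Fin d) (Fintype.card α - 1) :=
    (f (univ.max' hne), ⟨L.attach.map fun p => SimpleGraph.neighborIndex hdeg (hadj f p),
      by simp; omega⟩)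
  refine (Nat.card_le_card_of_injective code fun f f' hcode => DFunLike.ext _ _ fun i => ?_).trans
    (by rw [Nat.card_eq_fintype_card, Fintype.card_prod, card_vector, Fintype.card_fin])
  obtain ⟨hroot, hidx⟩ := Prod.ext_iff.1 hcode
  have hidx := List.map_inj_left.1 (congrArg Subtype.val hidx)
  refine hL.eqOn hT' (fun p hp hp2 => SimpleGraph.eq_of_neighborIndex_eq hdeg _ _ hp2
    (hidx ⟨p, hp⟩ (List.mem_attach _ _))) (fun i _ hi => ?_) (mem_coe.2 (mem_univ i))
  rw [hL.mem_map_fst_iff hT' hne (mem_univ i), not_not] at hi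
  exact hi ▸ hroot

theorem card_sigma_hom_le (hdeg : ∀ v, G.degree v ≤ d) :
    Nat.card (Σ T : {T : SimpleGraph α // T.IsTree}, T.1 →g G) ≤
      Fintype.card α ^ (Fintype.card α - 2) * (Fintype.card V * d ^ (Fintype.card α - 1)) := by
  have := Fintype.ofFinite {T : SimpleGraph α // T.IsTree}
  rw [Nat.card_sigma]
  calc _ ≤ ∑ _T : {T : SimpleGraph α // T.IsTree}, Fintype.card V * d ^ (Fintype.card α - 1) :=
        sum_le_sum fun T _ => card_hom_le hdeg T.2
    _ ≤ _ := by
      rw [sum_const, card_univ, smul_eq_mul, ← Nat.card_eq_fintype_card]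
      exact Nat.mul_le_mul_right _ card_isTree_le

end Counting

end Prufer

namespace SimpleGraph

variable {V : Type*} {G : SimpleGraph V}

lemma Subgraph.adj_iff_exists_equiv {α : Type*} {H : G.Subgraph} (e : α ≃ H.verts) {u v : V} :
    H.Adj u v ↔ ∃ a b, (e a : V) = u ∧ (e b : V) = v ∧ H.Adj (e a) (e b) := by
  refine ⟨fun h => ?_, fun ⟨a, b, hu, hv, h⟩ => hu ▸ hv ▸ h⟩
  obtain ⟨a, ha⟩ := e.surjective ⟨u, H.edge_vert h⟩
  obtain ⟨b, hb⟩ := e.surjective ⟨v, H.edge_vert h.symm⟩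
  exact ⟨a, b, by rw [ha], by rw [hb], by rw [ha, hb]; exact h⟩

lemma Subgraph.eq_of_equiv {α : Type*} {H H' : G.Subgraph} (e : α ≃ H.verts)
    (e' : α ≃ H'.verts) (he : ∀ i, (e i : V) = e' i)
    (hadj : ∀ a b, H.Adj (e a) (e b) ↔ H'.Adj (e' a) (e' b)) : H = H' := by
  refine Subgraph.ext ?_ (funext₂ fun u v => propext ?_)
  · rw [← Subtype.range_coe (s := H.verts), ← Subtype.range_coe (s := H'.verts),
      ← e.surjective.range_comp, ← e'.surjective.range_comp]
    exact congrArg Set.range (funext he)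
  · rw [adj_iff_exists_equiv e, adj_iff_exists_equiv e']
    exact exists₂_congr fun a b => by rw [hadj, he a, he b]

theorem ncard_subtrees_mul_factorial_le [Fintype V] [DecidableRel G.Adj] {d : ℕ}
    (hdeg : ∀ v, G.degree v ≤ d) (k : ℕ) :
    {H : G.Subgraph | H.verts.ncard = k ∧ H.coe.IsTree}.ncard * k ! ≤
      Fintype.card V * k ^ (k - 2) * d ^ (k - 1) := by
  set S := {H : G.Subgraph | H.verts.ncard = k ∧ H.coe.IsTree}
  have := Fintype.ofFinite S
  have hlabel : Nat.card (Σ H : S, Fin k ≃ H.1.verts) = S.ncard * k ! := by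
    have h (H : S) : Nat.card (Fin k ≃ H.1.verts) = k ! := by
      rw [Nat.card_congr ((Equiv.refl (Fin k)).equivCongr
        (Finite.equivFinOfCardEq ((Nat.card_coe_set_eq _).trans H.2.1))), Nat.card_perm,
        Nat.card_fin]
    rw [Nat.card_sigma, sum_congr rfl fun H _ => h H, sum_const, card_univ, smul_eq_mul,
      ← Nat.card_eq_fintype_card, Nat.card_coe_set_eq]
  let toTree (x : Σ H : S, Fin k ≃ H.1.verts) :
      Σ T : {T : SimpleGraph (Fin k) // T.IsTree}, T.1 →g G :=
    ⟨⟨x.1.1.coe.comap x.2, (Iso.comap x.2 x.1.1.coe).isTree_iff.2 x.1.2.2⟩,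
      x.1.1.hom.comp (Iso.comap x.2 x.1.1.coe).toHom⟩
  have hinj : Function.Injective toTree := by
    rintro ⟨⟨H, hH⟩, e⟩ ⟨⟨H', hH'⟩, e'⟩ h
    have he (i : Fin k) : (e i : V) = e' i := by
      simpa [toTree] using congrArg (fun x => x.2 i) h
    have hadj (a b : Fin k) : H.Adj (e a) (e b) ↔ H'.Adj (e' a) (e' b) := by
      simpa [toTree] using congrArg (fun x => x.1.1.Adj a b) h
    obtain rfl := Subgraph.eq_of_equiv e e' he hadj
    obtain rfl : e = e' := Equiv.ext fun i => Subtype.ext (he i)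
    rfl
  calc S.ncard * k ! = Nat.card (Σ H : S, Fin k ≃ H.1.verts) := hlabel.symm
    _ ≤ _ := Nat.card_le_card_of_injective toTree hinj
    _ ≤ _ := Prufer.card_sigma_hom_le hdeg
    _ = _ := by rw [Fintype.card_fin]; ring

end SimpleGraph

theorem stmt1_general {V : Type*} [Fintype V] (G : SimpleGraph V) [DecidableRel G.Adj]
    (n d k : ℕ) (hn : Fintype.card V = n) (hreg : G.IsRegularOfDegree d) :
    (({H : G.Subgraph | H.verts.ncard = k ∧ H.coe.IsTree} : Set G.Subgraph).ncard : ℝ)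
      ≤ (n : ℝ) * (k : ℝ) ^ (k - 2) * (d : ℝ) ^ (k - 1) / (Nat.factorial k) := by
  subst hn
  rw [le_div_iff₀ (by positivity)]
  exact_mod_cast G.ncard_subtrees_mul_factorial_le (fun v => (hreg v).le) k

theorem stmt1 {V : Type*} [Fintype V] [DecidableEq V] (G : SimpleGraph V) [DecidableRel G.Adj]
    (n d k : ℕ) (hn : Fintype.card V = n) (hreg : G.IsRegularOfDegree d) :
    (({H : G.Subgraph | H.verts.ncard = k ∧ H.coe.IsTree} : Set G.Subgraph).ncard : ℝ)
      ≤ (n : ℝ) * (k : ℝ) ^ (k - 2) * (d : ℝ) ^ (k - 1) / (Nat.factorial k) :=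
  stmt1_general G n d k hn hreg
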